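/- arXiv:2005.10042 — 2 statements merged into one kernel-verified Lean document; each statement's English description precedes it below -/
import Mathlib

section
/- Every solution y of the silicosis system on [0,T) satisfies, for each m ≥ 1 and t ∈ [0,T): Σ_{i≥m} i M_i(t) − Σ_{i≥m} i M_i(0) + ∫_0^t Σ_{i≥m} i(p_i+q_i)M_i(s) ds = ∫_0^t m x(s) k_{m−1} M_{m−1}(s) ds + ∫_0^t Σ_{i≥m} x(s) k_i M_i(s) ds. -/
/-!
Write `aᵢ = ∫₀ᵗ x kᵢ Mᵢ` and `dᵢ = Mᵢ(t) − Mᵢ(0) + ∫₀ᵗ (pᵢ + qᵢ) Mᵢ`. The equation for `M_{i+1}`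
says `d_{i+1} = aᵢ − a_{i+1}`, so `aₙ = ∑_{i>n} dᵢ`, and summation by parts gives
`∑_{i≥m} i dᵢ = m a_{m−1} + ∑_{i≥m} aᵢ`; the boundary term `(n+1) aₙ` is at most the tail
`∑_{i>n} i |dᵢ|`, hence vanishes. The summability of `(aᵢ)` and of `(i dᵢ)`, and the interchange
of `∑` and `∫`, come from domination by the moment sum `∑ (i pᵢ + i qᵢ + kᵢ) Mᵢ`, integrable for
a solution, together with the boundedness of `x` on `[0, t]`.
-/

open MeasureTheory Set Filter Topology

noncomputable section

/-- A solution of the silicosis system (Definition 2.2) on the time domain `D`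
(`D = Set.Ico 0 T` or `D = Set.Ici 0`): componentwise continuous, nonnegative,
with locally bounded norm `‖y(t)‖ = x(t) + ∑ (i+1) Mᵢ(t)`, the integrability
conditions, and the integrated versions of the equations. -/
structure IsSol (k p q : ℕ → ℝ) (r α : ℝ) (D : Set ℝ) (x : ℝ → ℝ) (M : ℕ → ℝ → ℝ) : Prop where
  x_nonneg : ∀ t ∈ D, 0 ≤ x t
  M_nonneg : ∀ (i : ℕ), ∀ t ∈ D, 0 ≤ M i t
  x_cont : ContinuousOn x D
  M_cont : ∀ i : ℕ, ContinuousOn (M i) D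
  summable_norm : ∀ t ∈ D, Summable (fun i : ℕ => ((i : ℝ) + 1) * M i t)
  norm_bdd : ∀ T' : ℝ, Icc (0:ℝ) T' ⊆ D →
    ∃ C : ℝ, ∀ t ∈ Icc (0:ℝ) T', x t + ∑' i : ℕ, ((i : ℝ) + 1) * M i t ≤ C
  summable_mom : ∀ t ∈ D,
    Summable (fun i : ℕ => ((i : ℝ) * p i + (i : ℝ) * q i + k i) * M i t)
  x_int : ∀ t ∈ D, IntervalIntegrable x volume 0 t
  mom_int : ∀ t ∈ D,
    IntervalIntegrable (fun s => ∑' i : ℕ, ((i : ℝ) * p i + (i : ℝ) * q i + k i) * M i s)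
      volume 0 t
  eq_M0 : ∀ t ∈ D,
    M 0 t = M 0 0 + r * t - ∫ s in (0:ℝ)..t, (k 0 * x s * M 0 s + (p 0 + q 0) * M 0 s)
  eq_M : ∀ i : ℕ, 1 ≤ i → ∀ t ∈ D,
    M i t = M i 0 + ∫ s in (0:ℝ)..t,
      (k (i-1) * x s * M (i-1) s - k i * x s * M i s - (p i + q i) * M i s)
  eq_x : ∀ t ∈ D,
    x t = x 0 + α * t + ∫ s in (0:ℝ)..t,
      (-(x s * ∑' i : ℕ, k i * M i s) + ∑' i : ℕ, (i : ℝ) * q i * M i s)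

theorem hasSum_sub_succ {G : Type*} [AddCommGroup G] [TopologicalSpace G] [IsTopologicalAddGroup G]
    [T2Space G] {a : ℕ → G} (ha : Tendsto a atTop (𝓝 0))
    (hs : Summable fun j => a j - a (j + 1)) : HasSum (fun j => a j - a (j + 1)) (a 0) := by
  rw [hs.hasSum_iff_tendsto_nat]
  simp_rw [Finset.sum_range_sub']
  simpa using tendsto_const_nhds.sub ha

theorem summable_succ_of_summable_natCast_mul {d : ℕ → ℝ}
    (hd : Summable fun i : ℕ => (i : ℝ) * d i) :
    Summable fun i => d (i + 1) := by
  refine ((summable_nat_add_iff 1).2 hd).norm.of_norm_bounded fun i => ?_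
  rw [norm_mul, Real.norm_natCast]
  exact le_mul_of_one_le_left (norm_nonneg _) (by simp)

theorem tendsto_natCast_mul_tsum_nat_add {d : ℕ → ℝ} (hd : Summable fun i : ℕ => (i : ℝ) * d i) :
    Tendsto (fun n : ℕ => (n : ℝ) * ∑' j, d (j + n)) atTop (𝓝 0) := by
  have htail : Summable fun i : ℕ => ‖(i : ℝ) * d i‖ := hd.norm
  refine squeeze_zero_norm (fun n => ?_) (tendsto_sum_nat_add fun i : ℕ => ‖(i : ℝ) * d i‖)
  have hle : ∀ j, ‖(n : ℝ) * d (j + n)‖ ≤ ‖((j + n : ℕ) : ℝ) * d (j + n)‖ := fun j => by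
    simp only [norm_mul, Real.norm_natCast]
    gcongr
    omega
  have hshift := (summable_nat_add_iff n).2 htail
  calc ‖(n : ℝ) * ∑' j, d (j + n)‖ = ‖∑' j, (n : ℝ) * d (j + n)‖ := by rw [tsum_mul_left]
    _ ≤ ∑' j, ‖(n : ℝ) * d (j + n)‖ :=
      norm_tsum_le_tsum_norm (hshift.of_nonneg_of_le (fun _ => norm_nonneg _) hle)
    _ ≤ ∑' j, ‖((j + n : ℕ) : ℝ) * d (j + n)‖ :=
      (hshift.of_nonneg_of_le (fun _ => norm_nonneg _) hle).tsum_le_tsum hle hshift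

theorem sum_range_add_natCast_mul_sub_succ (A : ℕ → ℝ) (c : ℝ) (N : ℕ) :
    ∑ j ∈ Finset.range N, (c + j) * (A j - A (j + 1))
      = c * A 0 + ∑ j ∈ Finset.range N, A (j + 1) - (c + N) * A N := by
  induction N with
  | zero => simp
  | succ N ih => rw [Finset.sum_range_succ, ih, Finset.sum_range_succ]; push_cast; ring

theorem tsum_add_natCast_mul_sub_succ {A : ℕ → ℝ} {c : ℝ}
    (hs : Summable fun j => (c + j) * (A j - A (j + 1))) (hA : Summable fun j => A (j + 1))
    (hlim : Tendsto (fun N : ℕ => (c + N) * A N) atTop (𝓝 0)) :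
    ∑' j, (c + j) * (A j - A (j + 1)) = c * A 0 + ∑' j, A (j + 1) := by
  refine tendsto_nhds_unique hs.hasSum.tendsto_sum_nat ?_
  simp_rw [sum_range_add_natCast_mul_sub_succ]
  simpa using (tendsto_const_nhds.add hA.hasSum.tendsto_sum_nat).sub hlim

theorem tsum_natCast_mul_nat_add_of_sub_succ {a d : ℕ → ℝ}
    (hstep : ∀ i, d (i + 1) = a i - a (i + 1)) (ha : Summable a) (hd : Summable fun i : ℕ => (i : ℝ) * d i) {m : ℕ} (hm : 1 ≤ m) :
    ∑' j, ((m + j : ℕ) : ℝ) * d (m + j) = m * a (m - 1) + ∑' j, a (m + j) := by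
  obtain ⟨n, rfl⟩ : ∃ n, m = n + 1 := ⟨m - 1, by omega⟩
  have hd₁ := summable_succ_of_summable_natCast_mul hd
  have htail : ∀ k, a k = ∑' j, d (j + k + 1) := fun k => by
    have h := hasSum_sub_succ (a := fun j => a (j + k))
      (ha.tendsto_atTop_zero.comp (tendsto_add_atTop_nat k))
      (((summable_nat_add_iff k).2 hd₁).congr fun j => by simp [hstep, Nat.add_right_comm])
    simpa [← hstep, Nat.add_right_comm] using h.tsum_eq.symm
  have hterm : ∀ j, ((n + 1 + j : ℕ) : ℝ) * d (n + 1 + j)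
      = ((n + 1 : ℝ) + j) * (a (n + j) - a (n + (j + 1))) := fun j => by
    rw [show n + 1 + j = n + j + 1 by omega, hstep, ← add_assoc]; push_cast; ring
  have hlim : Tendsto (fun N : ℕ => ((n + 1 : ℝ) + N) * a (n + N)) atTop (𝓝 0) := by
    refine ((tendsto_natCast_mul_tsum_nat_add hd).comp (tendsto_add_atTop_nat (n + 1))).congr
      fun N => ?_
    simp only [Function.comp_apply, htail (n + N)]
    rw [tsum_congr fun j => congrArg d (show j + (N + (n + 1)) = j + (n + N) + 1 by omega)]
    push_cast; ring
  rw [tsum_congr hterm, tsum_add_natCast_mul_sub_succ (A := fun j => a (n + j))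
    (((summable_nat_add_iff (n + 1)).2 hd).congr fun j => by rw [← hterm, add_comm j (n + 1)])
    (((summable_nat_add_iff (n + 1)).2 ha).congr fun j => by ring_nf) hlim]
  simp [add_assoc, add_comm 1]

theorem intervalIntegral.hasSum_integral_of_norm_le {ι E : Type*} [Countable ι]
    [NormedAddCommGroup E] [NormedSpace ℝ E] [CompleteSpace E] {f : ι → ℝ → E}
    {g : ι → ℝ → ℝ} {a b : ℝ} {μ : Measure ℝ} (hf : ∀ i, IntervalIntegrable (f i) μ a b)
    (hfg : ∀ i, ∀ s ∈ uIoc a b, ‖f i s‖ ≤ g i s) (hg : ∀ s ∈ uIoc a b, Summable fun i => g i s)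
    (hgi : IntervalIntegrable (fun s => ∑' i, g i s) μ a b) :
    HasSum (fun i => ∫ s in a..b, f i s ∂μ) (∫ s in a..b, ∑' i, f i s ∂μ) :=
  intervalIntegral.hasSum_integral_of_dominated_convergence g
    (fun i => (intervalIntegrable_iff.1 (hf i)).aestronglyMeasurable)
    (fun i => ae_of_all _ (hfg i)) (ae_of_all _ hg) hgi
    (ae_of_all _ fun s hs => ((hg s hs).of_norm_bounded (hfg · s hs)).hasSum)

theorem intervalIntegral.integral_tsum_of_nonneg {ι : Type*} [Countable ι] {f : ι → ℝ → ℝ}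
    {a b : ℝ} {μ : Measure ℝ} (hab : a ≤ b) (hf : ∀ i, IntervalIntegrable (f i) μ a b)
    (hf0 : ∀ i, ∀ s ∈ Ioc a b, 0 ≤ f i s) (hs : Summable fun i => ∫ s in a..b, f i s ∂μ) :
    ∫ s in a..b, ∑' i, f i s ∂μ = ∑' i, ∫ s in a..b, f i s ∂μ := by
  simp only [intervalIntegral.integral_of_le hab] at hs ⊢
  refine (integral_tsum_of_summable_integral_norm (fun i => (hf i).1) (hs.congr fun i => ?_)).symm
  exact setIntegral_congr_fun measurableSet_Ioc fun s hs => (Real.norm_of_nonneg (hf0 i s hs)).symm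

theorem Set.uIcc_subset_Ico_of_mem {α : Type*} [LinearOrder α] {a t T : α} (ht : t ∈ Ico a T) :
    uIcc a t ⊆ Ico a T := by
  rw [uIcc_of_le ht.1]
  exact Icc_subset_Ico_right ht.2

namespace IsSol

variable {k p q : ℕ → ℝ} {r α T t : ℝ} {x : ℝ → ℝ} {M : ℕ → ℝ → ℝ}

theorem summable_natCast_mul_M {D : Set ℝ} (hsol : IsSol k p q r α D x M) (ht : t ∈ D) :
    Summable fun i : ℕ => (i : ℝ) * M i t :=
  (hsol.summable_norm t ht).of_nonneg_of_le
    (fun i => mul_nonneg i.cast_nonneg (hsol.M_nonneg i t ht))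
    fun i => mul_le_mul_of_nonneg_right (by linarith) (hsol.M_nonneg i t ht)

theorem intervalIntegrable_const_mul_M (hsol : IsSol k p q r α (Ico 0 T) x M) (ht : t ∈ Ico 0 T)
    (c : ℝ) (i : ℕ) : IntervalIntegrable (fun s => c * M i s) volume 0 t :=
  (continuousOn_const.mul ((hsol.M_cont i).mono (uIcc_subset_Ico_of_mem ht))).intervalIntegrable

theorem intervalIntegrable_flux (hsol : IsSol k p q r α (Ico 0 T) x M) (ht : t ∈ Ico 0 T)
    (i : ℕ) : IntervalIntegrable (fun s => x s * k i * M i s) volume 0 t :=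
  (((hsol.x_cont.mono (uIcc_subset_Ico_of_mem ht)).mul continuousOn_const).mul
    ((hsol.M_cont i).mono (uIcc_subset_Ico_of_mem ht))).intervalIntegrable

theorem sub_add_integral_loss_eq (hsol : IsSol k p q r α (Ico 0 T) x M) (ht : t ∈ Ico 0 T)
    (i : ℕ) :
    M (i + 1) t - M (i + 1) 0 + ∫ s in (0:ℝ)..t, (p (i + 1) + q (i + 1)) * M (i + 1) s
      = (∫ s in (0:ℝ)..t, x s * k i * M i s) - ∫ s in (0:ℝ)..t, x s * k (i + 1) * M (i + 1) s := by
  have h := hsol.eq_M (i + 1) (Nat.le_add_left 1 i) t ht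
  simp only [Nat.add_sub_cancel, mul_comm (k _) (x _)] at h
  have hA := hsol.intervalIntegrable_flux ht i
  have hB := hsol.intervalIntegrable_flux ht (i + 1)
  rw [intervalIntegral.integral_sub (hA.sub hB) (hsol.intervalIntegrable_const_mul_M ht _ _),
    intervalIntegral.integral_sub hA hB] at h
  linarith

theorem summable_integral_of_norm_le_mom (hsol : IsSol k p q r α (Ico 0 T) x M)
    (ht : t ∈ Ico 0 T) {f : ℕ → ℝ → ℝ} (hf : ∀ i, IntervalIntegrable (f i) volume 0 t) (C : ℝ)
    (hfC : ∀ i, ∀ s ∈ uIcc 0 t, ‖f i s‖ ≤ C * (((i : ℝ) * p i + (i : ℝ) * q i + k i) * M i s)) :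
    Summable fun i => ∫ s in (0:ℝ)..t, f i s :=
  (intervalIntegral.hasSum_integral_of_norm_le hf (fun i s hs => hfC i s (uIoc_subset_uIcc hs))
    (fun s hs => (hsol.summable_mom s (uIcc_subset_Ico_of_mem ht (uIoc_subset_uIcc hs))).mul_left C)
    (by simpa only [tsum_mul_left] using (hsol.mom_int t ht).const_mul C)).summable

theorem summable_integral_flux (hsol : IsSol k p q r α (Ico 0 T) x M) (hk : ∀ i, 0 ≤ k i)
    (hp : ∀ i, 0 ≤ p i) (hq : ∀ i, 0 ≤ q i) (ht : t ∈ Ico 0 T) :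
    Summable fun i => ∫ s in (0:ℝ)..t, x s * k i * M i s := by
  obtain ⟨C, hC⟩ := isCompact_uIcc.exists_bound_of_continuousOn
    (hsol.x_cont.mono (uIcc_subset_Ico_of_mem ht))
  have hC0 : 0 ≤ C := (norm_nonneg _).trans (hC 0 left_mem_uIcc)
  refine hsol.summable_integral_of_norm_le_mom ht (hsol.intervalIntegrable_flux ht) C
    fun i s hs => ?_
  have hkM : 0 ≤ k i * M i s := mul_nonneg (hk i) (hsol.M_nonneg i s (uIcc_subset_Ico_of_mem ht hs))
  have hk_le : k i ≤ (i : ℝ) * p i + (i : ℝ) * q i + k i :=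
    le_add_of_nonneg_left <|
      add_nonneg (mul_nonneg i.cast_nonneg (hp i)) (mul_nonneg i.cast_nonneg (hq i))
  calc ‖x s * k i * M i s‖ = ‖x s‖ * (k i * M i s) := by
        rw [mul_assoc, norm_mul, Real.norm_of_nonneg hkM]
    _ ≤ C * (k i * M i s) := mul_le_mul_of_nonneg_right (hC s hs) hkM
    _ ≤ C * (((i : ℝ) * p i + (i : ℝ) * q i + k i) * M i s) :=
        mul_le_mul_of_nonneg_left (mul_le_mul_of_nonneg_right hk_le
          (hsol.M_nonneg i s (uIcc_subset_Ico_of_mem ht hs))) hC0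

theorem summable_integral_loss (hsol : IsSol k p q r α (Ico 0 T) x M) (hk : ∀ i, 0 ≤ k i)
    (hp : ∀ i, 0 ≤ p i) (hq : ∀ i, 0 ≤ q i) (ht : t ∈ Ico 0 T) :
    Summable fun i : ℕ => ∫ s in (0:ℝ)..t, (i : ℝ) * (p i + q i) * M i s := by
  refine hsol.summable_integral_of_norm_le_mom ht
    (fun i => hsol.intervalIntegrable_const_mul_M ht _ i) 1 fun i s hs => ?_
  have hM := hsol.M_nonneg i s (uIcc_subset_Ico_of_mem ht hs)
  have hpq : 0 ≤ (i : ℝ) * (p i + q i) := mul_nonneg i.cast_nonneg (add_nonneg (hp i) (hq i))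
  rw [Real.norm_of_nonneg (mul_nonneg hpq hM), one_mul]
  exact mul_le_mul_of_nonneg_right (by linarith [hk i]) hM

theorem integral_tsum_flux (hsol : IsSol k p q r α (Ico 0 T) x M) (hk : ∀ i, 0 ≤ k i)
    (hp : ∀ i, 0 ≤ p i) (hq : ∀ i, 0 ≤ q i) (ht : t ∈ Ico 0 T) (m : ℕ) :
    ∫ s in (0:ℝ)..t, ∑' i, x s * k (m + i) * M (m + i) s
      = ∑' i, ∫ s in (0:ℝ)..t, x s * k (m + i) * M (m + i) s :=
  intervalIntegral.integral_tsum_of_nonneg ht.1 (fun _ => hsol.intervalIntegrable_flux ht _)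
    (fun _ s hs => mul_nonneg (mul_nonneg (hsol.x_nonneg s ⟨hs.1.le, hs.2.trans_lt ht.2⟩) (hk _))
      (hsol.M_nonneg _ s ⟨hs.1.le, hs.2.trans_lt ht.2⟩))
    ((hsol.summable_integral_flux hk hp hq ht).comp_injective (add_right_injective m))

theorem integral_tsum_loss (hsol : IsSol k p q r α (Ico 0 T) x M) (hk : ∀ i, 0 ≤ k i)
    (hp : ∀ i, 0 ≤ p i) (hq : ∀ i, 0 ≤ q i) (ht : t ∈ Ico 0 T) (m : ℕ) :
    ∫ s in (0:ℝ)..t, ∑' i, ((m + i : ℕ) : ℝ) * (p (m + i) + q (m + i)) * M (m + i) s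
      = ∑' i, ∫ s in (0:ℝ)..t, ((m + i : ℕ) : ℝ) * (p (m + i) + q (m + i)) * M (m + i) s :=
  intervalIntegral.integral_tsum_of_nonneg ht.1
    (fun _ => hsol.intervalIntegrable_const_mul_M ht _ _)
    (fun _ s hs => mul_nonneg (mul_nonneg (Nat.cast_nonneg _) (add_nonneg (hp _) (hq _)))
      (hsol.M_nonneg _ s ⟨hs.1.le, hs.2.trans_lt ht.2⟩))
    ((hsol.summable_integral_loss hk hp hq ht).comp_injective (add_right_injective m))

end IsSol

theorem silicosis_weighted_tail_identity_general
    (k p q : ℕ → ℝ)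
    (hk : ∀ i, 0 ≤ k i) (hp : ∀ i, 0 ≤ p i) (hq : ∀ i, 0 ≤ q i)
    (r α : ℝ)
    (T : ℝ) (x : ℝ → ℝ) (M : ℕ → ℝ → ℝ)
    (hsol : IsSol k p q r α (Set.Ico 0 T) x M) :
    ∀ m : ℕ, 1 ≤ m → ∀ t ∈ Set.Ico (0:ℝ) T,
      (∑' i : ℕ, ((m + i : ℕ) : ℝ) * M (m+i) t) - (∑' i : ℕ, ((m + i : ℕ) : ℝ) * M (m+i) 0)
        + (∫ s in (0:ℝ)..t, ∑' i : ℕ, ((m + i : ℕ) : ℝ) * (p (m+i) + q (m+i)) * M (m+i) s)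
      = (∫ s in (0:ℝ)..t, (m : ℝ) * x s * k (m-1) * M (m-1) s)
        + ∫ s in (0:ℝ)..t, ∑' i : ℕ, x s * k (m+i) * M (m+i) s := by
  intro m hm t ht
  have h0 : (0 : ℝ) ∈ Ico 0 T := ⟨le_rfl, ht.1.trans_lt ht.2⟩
  have hshift {f : ℕ → ℝ} (hf : Summable f) : Summable fun j => f (m + j) :=
    hf.comp_injective (add_right_injective m)
  have hMt := hsol.summable_natCast_mul_M ht
  have hM0 := hsol.summable_natCast_mul_M h0
  have hloss := hsol.summable_integral_loss hk hp hq ht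
  have key := tsum_natCast_mul_nat_add_of_sub_succ
    (a := fun i => ∫ s in (0:ℝ)..t, x s * k i * M i s)
    (d := fun i => M i t - M i 0 + ∫ s in (0:ℝ)..t, (p i + q i) * M i s)
    (hsol.sub_add_integral_loss_eq ht) (hsol.summable_integral_flux hk hp hq ht)
    (((hMt.sub hM0).add hloss).congr fun i => by
      simp only [mul_assoc, intervalIntegral.integral_const_mul]; ring) hm
  rw [hsol.integral_tsum_loss hk hp hq ht, hsol.integral_tsum_flux hk hp hq ht,
    ← (hshift hMt).tsum_sub (hshift hM0), ← ((hshift hMt).sub (hshift hM0)).tsum_add (hshift hloss)]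
  simp only [mul_assoc, intervalIntegral.integral_const_mul] at key ⊢
  rw [← key]
  exact tsum_congr fun j => by ring

/-- the moment identity with weights `gᵢ = i` (equation (5.7)):
for every solution on `[0,T)`, every `m ≥ 1` and `t ∈ [0,T)`,
`∑_{i≥m} i Mᵢ(t) − ∑_{i≥m} i Mᵢ(0) + ∫₀ᵗ ∑_{i≥m} i(pᵢ+qᵢ)Mᵢ
  = ∫₀ᵗ m x k_{m−1} M_{m−1} + ∫₀ᵗ ∑_{i≥m} x kᵢ Mᵢ`. -/
theorem silicosis_weighted_tail_identity
    (k p q : ℕ → ℝ)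
    (hk : ∀ i, 0 ≤ k i) (hp : ∀ i, 0 ≤ p i) (hq : ∀ i, 0 ≤ q i)
    (r α : ℝ) (hr : 0 ≤ r) (hα : 0 ≤ α)
    (T : ℝ) (x : ℝ → ℝ) (M : ℕ → ℝ → ℝ)
    (hsol : IsSol k p q r α (Set.Ico 0 T) x M) :
    ∀ m : ℕ, 1 ≤ m → ∀ t ∈ Set.Ico (0:ℝ) T,
      (∑' i : ℕ, ((m + i : ℕ) : ℝ) * M (m+i) t) - (∑' i : ℕ, ((m + i : ℕ) : ℝ) * M (m+i) 0)
        + (∫ s in (0:ℝ)..t, ∑' i : ℕ, ((m + i : ℕ) : ℝ) * (p (m+i) + q (m+i)) * M (m+i) s)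
      = (∫ s in (0:ℝ)..t, (m : ℝ) * x s * k (m-1) * M (m-1) s)
        + ∫ s in (0:ℝ)..t, ∑' i : ℕ, x s * k (m+i) * M (m+i) s :=
  silicosis_weighted_tail_identity_general k p q hk hp hq r α T x M hsol
end
end

section
/- Suppose (k_i) and (q_i) satisfy (i+1)q_{i+1} ≥ i q_i for sufficiently large i and ((i+1)q_{i+1} − i q_i)k_i = O(i q_i). Then for every solution y of the silicosis system on [0,T), the function Q(t) = Σ_{i≥1} i q_i M_i(t) is absolutely continuous on each compact subinterval of the open interval (0,T). -/
open MeasureTheory Set Filter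

noncomputable section

/-- A real function is absolutely continuous on `[a,b]` iff it is an indefinite
integral of a Lebesgue-integrable function. -/
def AbsContOn (f : ℝ → ℝ) (a b : ℝ) : Prop :=
  ∃ h : ℝ → ℝ, IntervalIntegrable h volume a b ∧
    ∀ t ∈ Set.Icc a b, f t = f a + ∫ s in a..t, h s

open Topology Interval

/-!
Write `g i = i qᵢ` and `Jᵢ = kᵢ x Mᵢ`. Summing the equations for the `Mᵢ` against `g` and summing
by parts turns the transfer terms into `∑ (g (i+1) - g i) Jᵢ`. Up to finitely many terms this is
bounded by `|C| (sup x) ∑ g i Mᵢ`, hence by a multiple of `∑ (i pᵢ + i qᵢ + kᵢ) Mᵢ`, which is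
integrable for a solution; the losses `g i (pᵢ + qᵢ) Mᵢ` are nonnegative.
Summation by parts leaves a boundary term `g m Jₘ`, so it is first done with the weights capped at
`g n`, for which the boundary term vanishes as `m → ∞` because `Jₘ → 0`. Letting `n → ∞`, the
transfer terms converge by dominated convergence, and the identity itself bounds the integrals of
the losses, which therefore converge by monotone convergence. Hence `Q t = Q 0 + ∫₀ᵗ h` on
`[0, b]` for every `b < T`, with `h` integrable.
-/

section Integration

variable {α : Type*} [MeasurableSpace α] {μ : Measure α}

theorem integrable_tsum_and_hasSum_integral_of_nonneg {f : ℕ → α → ℝ}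
    (hf : ∀ i, Integrable (f i) μ) (hf0 : ∀ i, 0 ≤ᵐ[μ] f i)
    (hs : Summable fun i => ∫ a, f i a ∂μ) :
    Integrable (fun a => ∑' i, f i a) μ ∧
      HasSum (fun i => ∫ a, f i a ∂μ) (∫ a, ∑' i, f i a ∂μ) := by
  have hofReal : ∀ i, ∫⁻ a, ENNReal.ofReal (f i a) ∂μ = ENNReal.ofReal (∫ a, f i a ∂μ) :=
    fun i => (ofReal_integral_eq_lintegral_ofReal (hf i) (hf0 i)).symm
  have hmeas : AEMeasurable (fun a => ∑' i, ENNReal.ofReal (f i a)) μ :=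
    AEMeasurable.tsum fun i => (hf i).aemeasurable.ennreal_ofReal
  have hfin : ∫⁻ a, ∑' i, ENNReal.ofReal (f i a) ∂μ < ⊤ := by
    rw [lintegral_tsum fun i => (hf i).aemeasurable.ennreal_ofReal]
    simp only [hofReal]
    rw [← ENNReal.ofReal_tsum_of_nonneg (fun i => integral_nonneg_of_ae (hf0 i)) hs]
    exact ENNReal.ofReal_lt_top
  have hsum : ∀ᵐ a ∂μ, HasSum (fun i => f i a) (∑' i, f i a) := by
    filter_upwards [ae_lt_top' hmeas hfin.ne, ae_all_iff.2 hf0] with a ha h0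
    exact ((ENNReal.summable_toReal ha.ne).congr fun i => ENNReal.toReal_ofReal (h0 i)).hasSum
  have hnonneg : 0 ≤ᵐ[μ] fun a => ∑' i, f i a := by
    filter_upwards [ae_all_iff.2 hf0] with a h0 using tsum_nonneg h0
  refine ⟨⟨aestronglyMeasurable_of_tendsto_ae atTop
      (fun n => (integrable_finsetSum _ fun i _ => hf i).aestronglyMeasurable)
      (hsum.mono fun a ha => ha.tendsto_sum_nat), ?_⟩,
    hasSum_integral_of_summable_integral_norm hf (hs.congr fun i =>
      integral_congr_ae ((hf0 i).mono fun a ha => (Real.norm_of_nonneg ha).symm))⟩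
  rw [hasFiniteIntegral_iff_ofReal hnonneg]
  refine (lintegral_congr_ae ?_).trans_lt hfin
  filter_upwards [hsum, ae_all_iff.2 hf0] with a ha h0
  exact ENNReal.ofReal_tsum_of_nonneg h0 ha.summable

end Integration

theorem mem_Icc_of_mem_uIoc {a b t s : ℝ} (ht : t ∈ Icc a b) (hs : s ∈ Ι a t) : s ∈ Icc a b :=
  uIcc_subset_Icc (left_mem_Icc.2 (ht.1.trans ht.2)) ht (uIoc_subset_uIcc hs)

theorem ContinuousOn.intervalIntegrable_of_mem_Icc {f : ℝ → ℝ} {a b t : ℝ}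
    (hf : ContinuousOn f (Icc a b)) (ht : t ∈ Icc a b) : IntervalIntegrable f volume a t :=
  (hf.mono (uIcc_subset_Icc (left_mem_Icc.2 (ht.1.trans ht.2)) ht)).intervalIntegrable

theorem ContinuousOn.aestronglyMeasurable_uIoc_of_mem_Icc {f : ℝ → ℝ} {a b t : ℝ}
    (hf : ContinuousOn f (Icc a b)) (ht : t ∈ Icc a b) :
    AEStronglyMeasurable f (volume.restrict (Ι a t)) :=
  (hf.mono fun _ hs => mem_Icc_of_mem_uIoc ht hs).aestronglyMeasurable measurableSet_uIoc

theorem apply_min_le_of_monotoneOn {g : ℕ → ℝ} {N n : ℕ} (hg : MonotoneOn g (Ici N))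
    (hn : N ≤ n) (i : ℕ) : g (min i n) ≤ g i := by
  rcases le_total i n with hin | hni
  · rw [min_eq_left hin]
  · rw [min_eq_right hni]
    exact hg hn (hn.trans hni) hni

theorem summable_apply_min_mul_and_tsum_le {g u : ℕ → ℝ} {N n : ℕ} (hg0 : ∀ i, 0 ≤ g i)
    (hg : MonotoneOn g (Ici N)) (hn : N ≤ n) (hu : ∀ i, 0 ≤ u i)
    (hs : Summable fun i => g i * u i) :
    Summable (fun i => g (min i n) * u i) ∧ ∑' i, g (min i n) * u i ≤ ∑' i, g i * u i := by
  have hle : ∀ i, g (min i n) * u i ≤ g i * u i :=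
    fun i => mul_le_mul_of_nonneg_right (apply_min_le_of_monotoneOn hg hn i) (hu i)
  have hsum := hs.of_nonneg_of_le (fun i => mul_nonneg (hg0 _) (hu i)) hle
  exact ⟨hsum, hsum.tsum_le_tsum hle hs⟩

theorem tendsto_tsum_apply_min_mul {g u : ℕ → ℝ} {N : ℕ} (hg0 : ∀ i, 0 ≤ g i)
    (hg : MonotoneOn g (Ici N)) (hu : ∀ i, 0 ≤ u i) (hs : Summable fun i => g i * u i) :
    Tendsto (fun n => ∑' i, g (min i n) * u i) atTop (𝓝 (∑' i, g i * u i)) := by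
  refine tendsto_tsum_of_dominated_convergence hs (fun i => tendsto_const_nhds.congr' ?_) ?_
  · filter_upwards [eventually_ge_atTop i] with n hn
    rw [min_eq_left hn]
  · filter_upwards [eventually_ge_atTop N] with n hn i
    rw [Real.norm_of_nonneg (mul_nonneg (hg0 _) (hu i))]
    exact mul_le_mul_of_nonneg_right (apply_min_le_of_monotoneOn hg hn i) (hu i)

theorem sum_range_apply_min_sub_mul (g F : ℕ → ℝ) (n : ℕ) :
    ∑ j ∈ Finset.range n, (g (min (j + 1) n) - g (min j n)) * F j
      = ∑ j ∈ Finset.range n, (g (j + 1) - g j) * F j :=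
  Finset.sum_congr rfl fun j hj => by
    rw [min_eq_left (Finset.mem_range.1 hj), min_eq_left (Finset.mem_range.1 hj).le]

/-- Compartments `M i` on `[0, b]`: mass flows from compartment `i` to `i + 1` at rate `J i` and
leaves compartment `i` at rate `L i`. -/
structure IsFluxChain (b : ℝ) (M J L : ℕ → ℝ → ℝ) (D : ℝ → ℝ) : Prop where
  M_nonneg : ∀ i, ∀ t ∈ Icc 0 b, 0 ≤ M i t
  L_nonneg : ∀ i, ∀ t ∈ Icc 0 b, 0 ≤ L i t
  J_cont : ∀ i, ContinuousOn (J i) (Icc 0 b)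
  L_cont : ∀ i, ContinuousOn (L i) (Icc 0 b)
  eq_succ : ∀ i, ∀ t ∈ Icc 0 b,
    M (i + 1) t = M (i + 1) 0 + ∫ s in 0..t, (J i s - J (i + 1) s - L (i + 1) s)
  tendsto_J : ∀ s ∈ Icc 0 b, Tendsto (fun i => J i s) atTop (𝓝 0)
  abs_J_le : ∀ i, ∀ s ∈ Icc 0 b, |J i s| ≤ D s
  D_int : IntervalIntegrable D volume 0 b

namespace IsFluxChain

variable {b : ℝ} {M J L : ℕ → ℝ → ℝ} {D : ℝ → ℝ}

theorem sum_range_succ_mul_eq (hc : IsFluxChain b M J L D) {w : ℕ → ℝ} (hw : w 0 = 0) (m : ℕ)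
    {t : ℝ} (ht : t ∈ Icc 0 b) :
    ∑ i ∈ Finset.range (m + 1), w i * M i t =
      ∑ i ∈ Finset.range (m + 1), w i * M i 0
        + (∫ s in 0..t, ∑ j ∈ Finset.range m, (w (j + 1) - w j) * J j s)
        - w m * (∫ s in 0..t, J m s)
        - ∑ i ∈ Finset.range (m + 1), w i * ∫ s in 0..t, L i s := by
  have hJ : ∀ j, IntervalIntegrable (J j) volume 0 t :=
    fun j => (hc.J_cont j).intervalIntegrable_of_mem_Icc ht
  have hL : ∀ j, IntervalIntegrable (L j) volume 0 t :=
    fun j => (hc.L_cont j).intervalIntegrable_of_mem_Icc ht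
  induction m with
  | zero => simp [hw]
  | succ m ih =>
    have hsum : IntervalIntegrable (fun s => ∑ j ∈ Finset.range m, (w (j + 1) - w j) * J j s)
        volume 0 t := by
      simpa only [Finset.sum_fn] using
        IntervalIntegrable.sum (Finset.range m) fun j _ => (hJ j).const_mul (w (j + 1) - w j)
    have hflux : ∫ s in 0..t, ∑ j ∈ Finset.range (m + 1), (w (j + 1) - w j) * J j s
        = (∫ s in 0..t, ∑ j ∈ Finset.range m, (w (j + 1) - w j) * J j s)
          + (w (m + 1) - w m) * ∫ s in 0..t, J m s := by
      simp only [Finset.sum_range_succ _ m]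
      rw [intervalIntegral.integral_add hsum ((hJ m).const_mul _),
        intervalIntegral.integral_const_mul]
    have hstep : ∫ s in 0..t, (J m s - J (m + 1) s - L (m + 1) s)
        = (∫ s in 0..t, J m s) - (∫ s in 0..t, J (m + 1) s) - ∫ s in 0..t, L (m + 1) s := by
      rw [intervalIntegral.integral_sub ((hJ m).sub (hJ (m + 1))) (hL (m + 1)),
        intervalIntegral.integral_sub (hJ m) (hJ (m + 1))]
    rw [Finset.sum_range_succ (fun i => w i * M i t), ih, hc.eq_succ m t ht, hstep, hflux,
      Finset.sum_range_succ (fun i => w i * M i 0) (m + 1),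
      Finset.sum_range_succ (fun i => w i * ∫ s in 0..t, L i s) (m + 1)]
    ring

theorem intervalIntegrable_D (hc : IsFluxChain b M J L D) {t : ℝ} (ht : t ∈ Icc 0 b) :
    IntervalIntegrable D volume 0 t :=
  hc.D_int.mono_set (uIcc_subset_uIcc_left (Icc_subset_uIcc ht))

theorem tendsto_integral_J (hc : IsFluxChain b M J L D) {t : ℝ} (ht : t ∈ Icc 0 b) :
    Tendsto (fun m => ∫ s in 0..t, J m s) atTop (𝓝 0) := by
  simpa using intervalIntegral.tendsto_integral_filter_of_dominated_convergence D
    (Eventually.of_forall fun m => (hc.J_cont m).aestronglyMeasurable_uIoc_of_mem_Icc ht)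
    (Eventually.of_forall fun m => ae_of_all _ fun s hs =>
      (hc.abs_J_le m s (mem_Icc_of_mem_uIoc ht hs)))
    (hc.intervalIntegrable_D ht)
    (ae_of_all _ fun s hs => hc.tendsto_J s (mem_Icc_of_mem_uIoc ht hs))

theorem hasSum_mul_integral_L_of_const (hc : IsFluxChain b M J L D) {w : ℕ → ℝ} (hw0 : w 0 = 0)
    (hw : ∀ i, 0 ≤ w i) {n : ℕ} (hwn : ∀ i ≥ n, w i = w n) {t : ℝ} (ht : t ∈ Icc 0 b)
    (hMt : Summable fun i => w i * M i t) (hM0 : Summable fun i => w i * M i 0) :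
    HasSum (fun i => w i * ∫ s in 0..t, L i s)
      (∑' i, w i * M i 0 - ∑' i, w i * M i t
        + ∫ s in 0..t, ∑ j ∈ Finset.range n, (w (j + 1) - w j) * J j s) := by
  rw [hasSum_iff_tendsto_nat_of_nonneg (fun i => mul_nonneg (hw i)
    (intervalIntegral.integral_nonneg ht.1 fun s hs =>
      hc.L_nonneg i s ⟨hs.1, hs.2.trans ht.2⟩)), ← tendsto_add_atTop_iff_nat 1]
  have hpartial : ∀ u : ℕ → ℝ, Summable u →
      Tendsto (fun m => ∑ i ∈ Finset.range (m + 1), u i) atTop (𝓝 (∑' i, u i)) :=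
    fun u hu => (tendsto_add_atTop_iff_nat 1).2 hu.hasSum.tendsto_sum_nat
  have hlim := (((hpartial _ hM0).sub (hpartial _ hMt)).add
    (tendsto_const_nhds (x := ∫ s in 0..t, ∑ j ∈ Finset.range n, (w (j + 1) - w j) * J j s))).sub
    ((hc.tendsto_integral_J ht).const_mul (w n))
  rw [mul_zero, sub_zero] at hlim
  refine hlim.congr' ?_
  filter_upwards [eventually_ge_atTop n] with m hm
  have hflux : (fun s => ∑ j ∈ Finset.range m, (w (j + 1) - w j) * J j s)
      = fun s => ∑ j ∈ Finset.range n, (w (j + 1) - w j) * J j s := by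
    funext s
    refine (Finset.sum_subset (Finset.range_subset_range.2 hm) fun j _ hj => ?_).symm
    have hnj : n ≤ j := not_lt.1 (Finset.mem_range.not.1 hj)
    rw [hwn (j + 1) (hnj.trans j.le_succ), hwn j hnj, sub_self, zero_mul]
  have := hc.sum_range_succ_mul_eq hw0 m ht
  rw [hflux, hwn m hm] at this
  linarith

section Weights

variable {g : ℕ → ℝ} {N : ℕ} {C : ℝ}

theorem abs_sum_range_sub_mul_J_le (hc : IsFluxChain b M J L D) (hg0 : ∀ i, 0 ≤ g i)
    (hgain : ∀ j ≥ N, ∀ s ∈ Icc 0 b, |(g (j + 1) - g j) * J j s| ≤ C * (g j * M j s))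
    (hgM : ∀ s ∈ Icc 0 b, Summable fun i => g i * M i s)
    (hgMD : ∀ s ∈ Icc 0 b, ∑' i, g i * M i s ≤ D s) {n : ℕ} (hn : N ≤ n) {s : ℝ}
    (hs : s ∈ Icc 0 b) :
    |∑ j ∈ Finset.range n, (g (j + 1) - g j) * J j s|
      ≤ (∑ j ∈ Finset.range N, |g (j + 1) - g j| + |C|) * D s := by
  have hgM0 : ∀ j, 0 ≤ g j * M j s := fun j => mul_nonneg (hg0 j) (hc.M_nonneg j s hs)
  calc |∑ j ∈ Finset.range n, (g (j + 1) - g j) * J j s|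
      ≤ ∑ j ∈ Finset.range n, |(g (j + 1) - g j) * J j s| := Finset.abs_sum_le_sum_abs _ _
    _ = ∑ j ∈ Finset.range N, |(g (j + 1) - g j) * J j s|
          + ∑ j ∈ Finset.Ico N n, |(g (j + 1) - g j) * J j s| :=
        (Finset.sum_range_add_sum_Ico _ hn).symm
    _ ≤ ∑ j ∈ Finset.range N, |g (j + 1) - g j| * D s
          + ∑ j ∈ Finset.Ico N n, |C| * (g j * M j s) := by
        gcongr with j hj j hj
        · rw [abs_mul]
          exact mul_le_mul_of_nonneg_left (hc.abs_J_le j s hs) (abs_nonneg _)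
        · exact (hgain j (Finset.mem_Ico.1 hj).1 s hs).trans
            (mul_le_mul_of_nonneg_right (le_abs_self C) (hgM0 j))
    _ ≤ ∑ j ∈ Finset.range N, |g (j + 1) - g j| * D s + |C| * D s := by
        rw [← Finset.mul_sum]
        gcongr
        exact ((hgM s hs).sum_le_tsum _ fun j _ => hgM0 j).trans (hgMD s hs)
    _ = (∑ j ∈ Finset.range N, |g (j + 1) - g j| + |C|) * D s := by
        rw [add_mul, Finset.sum_mul]

theorem intervalIntegrable_tsum_sub_mul_J_and_tendsto (hc : IsFluxChain b M J L D) (hb : 0 ≤ b)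
    (hg0 : ∀ i, 0 ≤ g i)
    (hgain : ∀ j ≥ N, ∀ s ∈ Icc 0 b, |(g (j + 1) - g j) * J j s| ≤ C * (g j * M j s))
    (hgM : ∀ s ∈ Icc 0 b, Summable fun i => g i * M i s)
    (hgMD : ∀ s ∈ Icc 0 b, ∑' i, g i * M i s ≤ D s) :
    IntervalIntegrable (fun s => ∑' j, (g (j + 1) - g j) * J j s) volume 0 b ∧
      ∀ t ∈ Icc 0 b,
        Tendsto (fun n => ∫ s in 0..t, ∑ j ∈ Finset.range n, (g (j + 1) - g j) * J j s)
          atTop (𝓝 (∫ s in 0..t, ∑' j, (g (j + 1) - g j) * J j s)) := by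
  set K := ∑ j ∈ Finset.range N, |g (j + 1) - g j| + |C|
  have hsum : ∀ s ∈ Icc 0 b, Tendsto (fun n => ∑ j ∈ Finset.range n, (g (j + 1) - g j) * J j s)
      atTop (𝓝 (∑' j, (g (j + 1) - g j) * J j s)) := by
    intro s hs
    refine (Summable.of_norm_bounded_eventually_nat ((hgM s hs).mul_left |C|) ?_).hasSum
      |>.tendsto_sum_nat
    filter_upwards [eventually_ge_atTop N] with j hj
    exact (hgain j hj s hs).trans (mul_le_mul_of_nonneg_right (le_abs_self C)
      (mul_nonneg (hg0 j) (hc.M_nonneg j s hs)))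
  have hbound : ∀ᶠ n in atTop, ∀ s ∈ Icc 0 b,
      ‖∑ j ∈ Finset.range n, (g (j + 1) - g j) * J j s‖ ≤ K * D s := by
    filter_upwards [eventually_ge_atTop N] with n hn s hs
    exact abs_sum_range_sub_mul_J_le hc hg0 hgain hgM hgMD hn hs
  have hmeas : ∀ n, ∀ t ∈ Icc 0 b, AEStronglyMeasurable
      (fun s => ∑ j ∈ Finset.range n, (g (j + 1) - g j) * J j s) (volume.restrict (Ι 0 t)) :=
    fun n t ht => (continuousOn_finsetSum _ fun j _ =>
      continuousOn_const.mul (hc.J_cont j)).aestronglyMeasurable_uIoc_of_mem_Icc ht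
  have hb' : b ∈ Icc 0 b := ⟨hb, le_rfl⟩
  refine ⟨(hc.D_int.const_mul K).mono_fun' ?_ ?_, fun t ht => ?_⟩
  · exact aestronglyMeasurable_of_tendsto_ae atTop (fun n => hmeas n b hb')
      ((ae_restrict_iff' measurableSet_uIoc).2 (ae_of_all _ fun s hs =>
        hsum s (mem_Icc_of_mem_uIoc hb' hs)))
  · refine (ae_restrict_iff' measurableSet_uIoc).2 (ae_of_all _ fun s hs => ?_)
    have hs' := mem_Icc_of_mem_uIoc hb' hs
    exact le_of_tendsto (hsum s hs').norm (hbound.mono fun n hn => hn s hs')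
  · exact intervalIntegral.tendsto_integral_filter_of_dominated_convergence _
      (Eventually.of_forall fun n => hmeas n t ht)
      (hbound.mono fun n hn => ae_of_all _ fun s hs => hn s (mem_Icc_of_mem_uIoc ht hs))
      ((hc.intervalIntegrable_D ht).const_mul K)
      (ae_of_all _ fun s hs => hsum s (mem_Icc_of_mem_uIoc ht hs))

theorem hasSum_min_mul_integral_L (hc : IsFluxChain b M J L D) (hb : 0 ≤ b)
    (hg0 : ∀ i, 0 ≤ g i) (hgz : g 0 = 0) (hg : MonotoneOn g (Ici N))
    (hgM : ∀ s ∈ Icc 0 b, Summable fun i => g i * M i s) {n : ℕ} (hn : N ≤ n) {t : ℝ}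
    (ht : t ∈ Icc 0 b) :
    HasSum (fun i => g (min i n) * ∫ s in 0..t, L i s)
      (∑' i, g (min i n) * M i 0 - ∑' i, g (min i n) * M i t
        + ∫ s in 0..t, ∑ j ∈ Finset.range n, (g (j + 1) - g j) * J j s) := by
  have hsummable : ∀ τ ∈ Icc 0 b, Summable fun i => g (min i n) * M i τ := fun τ hτ =>
    (summable_apply_min_mul_and_tsum_le hg0 hg hn (fun i => hc.M_nonneg i τ hτ) (hgM τ hτ)).1
  have := hc.hasSum_mul_integral_L_of_const (w := fun i => g (min i n)) (by simpa using hgz)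
    (fun i => hg0 _) (n := n) (fun i hi => by simp [min_eq_right hi]) ht
    (hsummable t ht) (hsummable 0 ⟨le_rfl, hb⟩)
  simpa only [sum_range_apply_min_sub_mul] using this

theorem summable_mul_integral_L (hc : IsFluxChain b M J L D) (hb : 0 ≤ b)
    (hg0 : ∀ i, 0 ≤ g i) (hgz : g 0 = 0) (hg : MonotoneOn g (Ici N))
    (hgain : ∀ j ≥ N, ∀ s ∈ Icc 0 b, |(g (j + 1) - g j) * J j s| ≤ C * (g j * M j s))
    (hgM : ∀ s ∈ Icc 0 b, Summable fun i => g i * M i s)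
    (hgMD : ∀ s ∈ Icc 0 b, ∑' i, g i * M i s ≤ D s) {t : ℝ} (ht : t ∈ Icc 0 b) :
    Summable fun i => g i * ∫ s in 0..t, L i s := by
  have h0 : (0 : ℝ) ∈ Icc 0 b := ⟨le_rfl, hb⟩
  have hLnn : ∀ i, 0 ≤ ∫ s in 0..t, L i s := fun i =>
    intervalIntegral.integral_nonneg ht.1 fun s hs => hc.L_nonneg i s ⟨hs.1, hs.2.trans ht.2⟩
  refine summable_of_sum_range_le (fun i => mul_nonneg (hg0 i) (hLnn i))
    (c := ∑' i, g i * M i 0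
      + ∫ s in 0..t, (∑ j ∈ Finset.range N, |g (j + 1) - g j| + |C|) * D s) fun m => ?_
  set n := max m N
  have hn : N ≤ n := le_max_right _ _
  have hcap := hc.hasSum_min_mul_integral_L hb hg0 hgz hg hgM hn ht
  have hM0 : ∑' i, g (min i n) * M i 0 ≤ ∑' i, g i * M i 0 :=
    (summable_apply_min_mul_and_tsum_le hg0 hg hn (fun i => hc.M_nonneg i 0 h0) (hgM 0 h0)).2
  have hMt : 0 ≤ ∑' i, g (min i n) * M i t :=
    tsum_nonneg fun i => mul_nonneg (hg0 _) (hc.M_nonneg i t ht)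
  have hflux_le : ∫ s in 0..t, ∑ j ∈ Finset.range n, (g (j + 1) - g j) * J j s
      ≤ ∫ s in 0..t, (∑ j ∈ Finset.range N, |g (j + 1) - g j| + |C|) * D s :=
    intervalIntegral.integral_mono_on ht.1
      ((continuousOn_finsetSum _ fun j _ => continuousOn_const.mul
        (hc.J_cont j)).intervalIntegrable_of_mem_Icc ht)
      ((hc.intervalIntegrable_D ht).const_mul _) fun s hs => (le_abs_self _).trans
        (abs_sum_range_sub_mul_J_le hc hg0 hgain hgM hgMD hn ⟨hs.1, hs.2.trans ht.2⟩)
  calc ∑ i ∈ Finset.range m, g i * ∫ s in 0..t, L i s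
      = ∑ i ∈ Finset.range m, g (min i n) * ∫ s in 0..t, L i s :=
        Finset.sum_congr rfl fun i hi => by
          rw [min_eq_left ((Finset.mem_range.1 hi).le.trans (le_max_left _ _))]
    _ ≤ ∑' i, g (min i n) * ∫ s in 0..t, L i s :=
        hcap.summable.sum_le_tsum _ fun i _ => mul_nonneg (hg0 _) (hLnn i)
    _ ≤ _ := by
        rw [hcap.tsum_eq]
        linarith

theorem hasSum_mul_integral_L (hc : IsFluxChain b M J L D) (hb : 0 ≤ b)
    (hg0 : ∀ i, 0 ≤ g i) (hgz : g 0 = 0) (hg : MonotoneOn g (Ici N))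
    (hgain : ∀ j ≥ N, ∀ s ∈ Icc 0 b, |(g (j + 1) - g j) * J j s| ≤ C * (g j * M j s))
    (hgM : ∀ s ∈ Icc 0 b, Summable fun i => g i * M i s)
    (hgMD : ∀ s ∈ Icc 0 b, ∑' i, g i * M i s ≤ D s) {t : ℝ} (ht : t ∈ Icc 0 b) :
    HasSum (fun i => g i * ∫ s in 0..t, L i s)
      (∑' i, g i * M i 0 - ∑' i, g i * M i t
        + ∫ s in 0..t, ∑' j, (g (j + 1) - g j) * J j s) := by
  have h0 : (0 : ℝ) ∈ Icc 0 b := ⟨le_rfl, hb⟩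
  have hsum := hc.summable_mul_integral_L hb hg0 hgz hg hgain hgM hgMD ht
  have hLnn : ∀ i, 0 ≤ ∫ s in 0..t, L i s := fun i =>
    intervalIntegral.integral_nonneg ht.1 fun s hs => hc.L_nonneg i s ⟨hs.1, hs.2.trans ht.2⟩
  have hlim := ((tendsto_tsum_apply_min_mul hg0 hg (fun i => hc.M_nonneg i 0 h0) (hgM 0 h0)).sub
    (tendsto_tsum_apply_min_mul hg0 hg (fun i => hc.M_nonneg i t ht) (hgM t ht))).add
    ((hc.intervalIntegrable_tsum_sub_mul_J_and_tendsto hb hg0 hgain hgM hgMD).2 t ht)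
  have heq := tendsto_nhds_unique (tendsto_tsum_apply_min_mul hg0 hg hLnn hsum)
    (hlim.congr' ((eventually_ge_atTop N).mono fun n hn =>
      (hc.hasSum_min_mul_integral_L hb hg0 hgz hg hgM hn ht).tsum_eq.symm))
  exact heq ▸ hsum.hasSum

theorem intervalIntegrable_tsum_mul_L_and_integral_eq (hc : IsFluxChain b M J L D)
    (hb : 0 ≤ b)
    (hg0 : ∀ i, 0 ≤ g i) (hgz : g 0 = 0) (hg : MonotoneOn g (Ici N))
    (hgain : ∀ j ≥ N, ∀ s ∈ Icc 0 b, |(g (j + 1) - g j) * J j s| ≤ C * (g j * M j s))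
    (hgM : ∀ s ∈ Icc 0 b, Summable fun i => g i * M i s)
    (hgMD : ∀ s ∈ Icc 0 b, ∑' i, g i * M i s ≤ D s) {t : ℝ} (ht : t ∈ Icc 0 b) :
    IntervalIntegrable (fun s => ∑' i, g i * L i s) volume 0 t ∧
      ∫ s in 0..t, ∑' i, g i * L i s = ∑' i, g i * ∫ s in 0..t, L i s := by
  have hint : ∀ i, IntegrableOn (fun s => g i * L i s) (Ioc 0 t) := fun i =>
    (intervalIntegrable_iff_integrableOn_Ioc_of_le ht.1).1
      (((hc.L_cont i).intervalIntegrable_of_mem_Icc ht).const_mul (g i))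
  have hcoe : ∀ i, ∫ s in Ioc 0 t, g i * L i s = g i * ∫ s in 0..t, L i s := fun i => by
    rw [intervalIntegral.integral_of_le ht.1, integral_const_mul]
  obtain ⟨hW, hWsum⟩ := integrable_tsum_and_hasSum_integral_of_nonneg hint
    (fun i => (ae_restrict_iff' measurableSet_Ioc).2 (ae_of_all _ fun s hs =>
      mul_nonneg (hg0 i) (hc.L_nonneg i s ⟨hs.1.le, hs.2.trans ht.2⟩)))
    (by simpa only [hcoe] using hc.summable_mul_integral_L hb hg0 hgz hg hgain hgM hgMD ht)
  refine ⟨(intervalIntegrable_iff_integrableOn_Ioc_of_le ht.1).2 hW, ?_⟩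
  rw [intervalIntegral.integral_of_le ht.1, ← hWsum.tsum_eq]
  simp only [hcoe]

theorem exists_tsum_mul_eq_integral (hc : IsFluxChain b M J L D) (hb : 0 ≤ b)
    (hg0 : ∀ i, 0 ≤ g i) (hgz : g 0 = 0) (hg : MonotoneOn g (Ici N))
    (hgain : ∀ j ≥ N, ∀ s ∈ Icc 0 b, |(g (j + 1) - g j) * J j s| ≤ C * (g j * M j s))
    (hgM : ∀ s ∈ Icc 0 b, Summable fun i => g i * M i s)
    (hgMD : ∀ s ∈ Icc 0 b, ∑' i, g i * M i s ≤ D s) :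
    ∃ h : ℝ → ℝ, IntervalIntegrable h volume 0 b ∧
      ∀ t ∈ Icc 0 b, ∑' i, g i * M i t = ∑' i, g i * M i 0 + ∫ s in 0..t, h s := by
  have hS := (hc.intervalIntegrable_tsum_sub_mul_J_and_tendsto hb hg0 hgain hgM hgMD).1
  have hW := fun t (ht : t ∈ Icc 0 b) =>
    hc.intervalIntegrable_tsum_mul_L_and_integral_eq hb hg0 hgz hg hgain hgM hgMD ht
  refine ⟨fun s => ∑' j, (g (j + 1) - g j) * J j s - ∑' i, g i * L i s,
    hS.sub (hW b ⟨hb, le_rfl⟩).1, fun t ht => ?_⟩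
  rw [intervalIntegral.integral_sub (hS.mono_set (uIcc_subset_uIcc_left (Icc_subset_uIcc ht)))
    (hW t ht).1, (hW t ht).2,
    (hc.hasSum_mul_integral_L hb hg0 hgz hg hgain hgM hgMD ht).tsum_eq]
  ring

end Weights

end IsFluxChain

theorem AbsContOn.of_eq_integral {f h : ℝ → ℝ} {a b : ℝ} (ha : 0 ≤ a) (hab : a ≤ b)
    (hh : IntervalIntegrable h volume 0 b)
    (hf : ∀ t ∈ Icc 0 b, f t = f 0 + ∫ s in 0..t, h s) : AbsContOn f a b := by
  have hsub : ∀ t ∈ Icc a b, IntervalIntegrable h volume 0 t := fun t ht =>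
    hh.mono_set (uIcc_subset_uIcc_left (Icc_subset_uIcc ⟨ha.trans ht.1, ht.2⟩))
  refine ⟨h, hh.mono_set (uIcc_subset_uIcc (Icc_subset_uIcc ⟨ha, hab⟩) right_mem_uIcc),
    fun t ht => ?_⟩
  rw [hf t ⟨ha.trans ht.1, ht.2⟩, hf a ⟨ha, hab⟩,
    ← intervalIntegral.integral_interval_sub_left (hsub t ht) (hsub a (left_mem_Icc.2 hab))]
  ring

def moment (k p q : ℕ → ℝ) (M : ℕ → ℝ → ℝ) (s : ℝ) : ℝ :=
  ∑' i : ℕ, ((i : ℝ) * p i + (i : ℝ) * q i + k i) * M i s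

namespace IsSol

variable {k p q : ℕ → ℝ} {r α : ℝ} {D : Set ℝ} {x : ℝ → ℝ} {M : ℕ → ℝ → ℝ}

theorem summable_mul_and_tsum_le_moment (hsol : IsSol k p q r α D x M) {c : ℕ → ℝ}
    (hc0 : ∀ i, 0 ≤ c i) (hc : ∀ i, c i ≤ (i : ℝ) * p i + (i : ℝ) * q i + k i) {t : ℝ}
    (ht : t ∈ D) :
    Summable (fun i => c i * M i t) ∧ ∑' i, c i * M i t ≤ moment k p q M t := by
  have hle : ∀ i, c i * M i t ≤ ((i : ℝ) * p i + (i : ℝ) * q i + k i) * M i t :=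
    fun i => mul_le_mul_of_nonneg_right (hc i) (hsol.M_nonneg i t ht)
  have hsum := (hsol.summable_mom t ht).of_nonneg_of_le
    (fun i => mul_nonneg (hc0 i) (hsol.M_nonneg i t ht)) hle
  exact ⟨hsum, hsum.tsum_le_tsum hle (hsol.summable_mom t ht)⟩

theorem moment_nonneg (hsol : IsSol k p q r α D x M) (hk : ∀ i, 0 ≤ k i) (hp : ∀ i, 0 ≤ p i)
    (hq : ∀ i, 0 ≤ q i) {t : ℝ} (ht : t ∈ D) : 0 ≤ moment k p q M t :=
  tsum_nonneg fun i => mul_nonneg (add_nonneg (add_nonneg (mul_nonneg i.cast_nonneg (hp i))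
    (mul_nonneg i.cast_nonneg (hq i))) (hk i)) (hsol.M_nonneg i t ht)

theorem exists_x_le (hsol : IsSol k p q r α D x M) {b : ℝ} (hb : Icc 0 b ⊆ D) :
    ∃ X, 1 ≤ X ∧ ∀ t ∈ Icc 0 b, x t ≤ X := by
  obtain ⟨C, hC⟩ := hsol.norm_bdd b hb
  refine ⟨max C 1, le_max_right _ _, fun t ht => ?_⟩
  have hM : 0 ≤ ∑' i : ℕ, ((i : ℝ) + 1) * M i t :=
    tsum_nonneg fun i => mul_nonneg (by positivity) (hsol.M_nonneg i t (hb ht))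
  linarith [hC t ht, le_max_left C 1]

theorem isFluxChain (hsol : IsSol k p q r α D x M) (hk : ∀ i, 0 ≤ k i) (hp : ∀ i, 0 ≤ p i)
    (hq : ∀ i, 0 ≤ q i) {b : ℝ} (hb0 : 0 ≤ b) (hb : Icc 0 b ⊆ D) {X : ℝ}
    (hxX : ∀ t ∈ Icc 0 b, x t ≤ X) :
    IsFluxChain b M (fun i s => k i * x s * M i s) (fun i s => (p i + q i) * M i s)
      (fun s => X * moment k p q M s) := by
  have hkM : ∀ s ∈ D, Summable (fun i => k i * M i s) ∧ ∑' i, k i * M i s ≤ moment k p q M s :=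
    fun s hs => hsol.summable_mul_and_tsum_le_moment hk (fun i => le_add_of_nonneg_left
      (add_nonneg (mul_nonneg i.cast_nonneg (hp i)) (mul_nonneg i.cast_nonneg (hq i)))) hs
  refine
    { M_nonneg := fun i t ht => hsol.M_nonneg i t (hb ht)
      L_nonneg := fun i t ht => mul_nonneg (add_nonneg (hp i) (hq i)) (hsol.M_nonneg i t (hb ht))
      J_cont := fun i =>
        (continuousOn_const.mul (hsol.x_cont.mono hb)).mul ((hsol.M_cont i).mono hb)
      L_cont := fun i => continuousOn_const.mul ((hsol.M_cont i).mono hb)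
      eq_succ := fun i t ht => by
        simpa only [Nat.add_sub_cancel] using hsol.eq_M (i + 1) (Nat.le_add_left 1 i) t (hb ht)
      tendsto_J := fun s hs => ?_
      abs_J_le := fun i s hs => ?_
      D_int := (hsol.mom_int b (hb ⟨hb0, le_rfl⟩)).const_mul X }
  · simpa [mul_right_comm] using ((hkM s (hb hs)).1.tendsto_atTop_zero.mul_const (x s))
  · have hx := hsol.x_nonneg s (hb hs)
    have hkMi : 0 ≤ k i * M i s := mul_nonneg (hk i) (hsol.M_nonneg i s (hb hs))
    have hkM_le : k i * M i s ≤ moment k p q M s :=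
      ((hkM s (hb hs)).1.le_tsum i fun j _ => mul_nonneg (hk j) (hsol.M_nonneg j s (hb hs))).trans
        (hkM s (hb hs)).2
    calc |k i * x s * M i s| = x s * (k i * M i s) := by
          rw [abs_of_nonneg (by rw [mul_right_comm]; positivity)]
          ring
      _ ≤ X * moment k p q M s := mul_le_mul (hxX s hs) hkM_le hkMi (hx.trans (hxX s hs))

end IsSol

theorem abs_increment_mul_flux_le {k q : ℕ → ℝ} {N : ℕ} {C X : ℝ} (hk : ∀ i, 0 ≤ k i)
    (hmono : ∀ i ≥ N, (i : ℝ) * q i ≤ ((i : ℝ) + 1) * q (i+1))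
    (hO : ∀ i ≥ N, (((i : ℝ) + 1) * q (i+1) - (i : ℝ) * q i) * k i ≤ C * ((i : ℝ) * q i))
    {j : ℕ} (hj : N ≤ j) {y m : ℝ} (hy : 0 ≤ y) (hyX : y ≤ X) (hm : 0 ≤ m)
    (hq : 0 ≤ (j : ℝ) * q j) :
    |(((j + 1 : ℕ) : ℝ) * q (j + 1) - (j : ℝ) * q j) * (k j * y * m)|
      ≤ |C| * X * ((j : ℝ) * q j * m) := by
  push_cast
  have he : 0 ≤ ((j : ℝ) + 1) * q (j + 1) - (j : ℝ) * q j := sub_nonneg.2 (hmono j hj)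
  have hkym : 0 ≤ k j * y * m := by have := hk j; positivity
  rw [abs_of_nonneg (mul_nonneg he hkym)]
  calc (((j : ℝ) + 1) * q (j + 1) - (j : ℝ) * q j) * (k j * y * m)
      = ((((j : ℝ) + 1) * q (j + 1) - (j : ℝ) * q j) * k j) * (y * m) := by ring
    _ ≤ (|C| * ((j : ℝ) * q j)) * (X * m) :=
        mul_le_mul ((hO j hj).trans (mul_le_mul_of_nonneg_right (le_abs_self C) hq))
          (mul_le_mul_of_nonneg_right hyX hm) (mul_nonneg hy hm)
          (mul_nonneg (abs_nonneg C) hq)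
    _ = |C| * X * ((j : ℝ) * q j * m) := by ring

theorem silicosis_Q_absolutely_continuous_open_general
    (k p q : ℕ → ℝ)
    (hk : ∀ i, 0 ≤ k i) (hp : ∀ i, 0 ≤ p i) (hq : ∀ i, 0 ≤ q i)
    (r α : ℝ)
    (N : ℕ) (hmono : ∀ i ≥ N, (i : ℝ) * q i ≤ ((i : ℝ) + 1) * q (i+1))
    (C : ℝ) (hO : ∀ i ≥ N, (((i : ℝ) + 1) * q (i+1) - (i : ℝ) * q i) * k i ≤ C * ((i : ℝ) * q i))
    (T : ℝ) (x : ℝ → ℝ) (M : ℕ → ℝ → ℝ)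
    (hsol : IsSol k p q r α (Set.Ico 0 T) x M) :
    ∀ a b : ℝ, 0 < a → a ≤ b → b < T →
      AbsContOn (fun t => ∑' i : ℕ, (i : ℝ) * q i * M i t) a b := by
  intro a b ha hab hbT
  have hb : 0 ≤ b := ha.le.trans hab
  have hbD : Icc 0 b ⊆ Ico 0 T := Icc_subset_Ico_right hbT
  obtain ⟨X, hX, hxX⟩ := hsol.exists_x_le hbD
  have hg0 : ∀ i : ℕ, 0 ≤ (i : ℝ) * q i := fun i => mul_nonneg i.cast_nonneg (hq i)
  have hgM := fun t (ht : t ∈ Icc 0 b) => hsol.summable_mul_and_tsum_le_moment hg0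
    (fun i => by linarith [mul_nonneg i.cast_nonneg (hp i), hk i]) (hbD ht)
  obtain ⟨h, hh, heq⟩ := (hsol.isFluxChain hk hp hq hb hbD hxX)
    |>.exists_tsum_mul_eq_integral (g := fun i => (i : ℝ) * q i) hb hg0 (by simp)
      (monotoneOn_nat_Ici_of_le_succ fun i hi => by push_cast; exact hmono i hi)
      (fun j hj s hs => abs_increment_mul_flux_le hk hmono hO hj (hsol.x_nonneg s (hbD hs))
        (hxX s hs) (hsol.M_nonneg j s (hbD hs)) (hg0 j))
      (fun s hs => (hgM s hs).1)
      (fun s hs => (hgM s hs).2.trans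
        (le_mul_of_one_le_left (hsol.moment_nonneg hk hp hq (hbD hs)) hX))
  exact AbsContOn.of_eq_integral ha.le hab hh heq

/-- Proposition 5.5: if `(i+1)q_{i+1} ≥ i qᵢ` for sufficiently large `i`
and `((i+1)q_{i+1} − i qᵢ)kᵢ = O(i qᵢ)`, then `Q(t) = ∑_{i≥1} i qᵢ Mᵢ(t)` is absolutely
continuous on each compact subinterval of the open interval `(0,T)`. -/
theorem silicosis_Q_absolutely_continuous_open
    (k p q : ℕ → ℝ)
    (hk : ∀ i, 0 ≤ k i) (hp : ∀ i, 0 ≤ p i) (hq : ∀ i, 0 ≤ q i)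
    (r α : ℝ) (hr : 0 ≤ r) (hα : 0 ≤ α)
    (N : ℕ) (hmono : ∀ i ≥ N, (i : ℝ) * q i ≤ ((i : ℝ) + 1) * q (i+1))
    (C : ℝ) (hO : ∀ i ≥ N, (((i : ℝ) + 1) * q (i+1) - (i : ℝ) * q i) * k i ≤ C * ((i : ℝ) * q i))
    (T : ℝ) (x : ℝ → ℝ) (M : ℕ → ℝ → ℝ)
    (hsol : IsSol k p q r α (Set.Ico 0 T) x M) :
    ∀ a b : ℝ, 0 < a → a ≤ b → b < T →
      AbsContOn (fun t => ∑' i : ℕ, (i : ℝ) * q i * M i t) a b :=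
  silicosis_Q_absolutely_continuous_open_general k p q hk hp hq r α N hmono C hO T x M hsol
end
end
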